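/- The polynomials X(x,u) = x² + u² and Y(x,u) = x³ − 3xu² are algebraically independent over ℝ: no nonzero polynomial P(X,Y) in two variables vanishes identically when X and Y are substituted. -/

import Mathlib

/-- The polynomial `X = x² + u²`. -/
noncomputable def polyX : MvPolynomial (Fin 2) ℝ :=
  MvPolynomial.X 0 ^ 2 + MvPolynomial.X 1 ^ 2

/-- The polynomial `Y = x³ − 3xu²`. -/
noncomputable def polyY : MvPolynomial (Fin 2) ℝ :=
  MvPolynomial.X 0 ^ 3 - 3 * MvPolynomial.X 0 * MvPolynomial.X 1 ^ 2

/-!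
Identifying `(x, u)` with `z = x + u i`, one has `X = |z|²` and `Y = Re z³`. Taking for `z` a cube
root of `b + i √(a³ - b²)` shows that `(X, Y)` attains every `(a, b)` with `a ≥ 0` and `b² ≤ a³`,
in particular every point of the box `(1, ∞) × (-1, 1)`. So `P` vanishes on a box with infinite
sides and is therefore zero.
-/

open MvPolynomial

theorem MvPolynomial.eval_eq_zero_of_aeval_eq_zero {R σ τ : Type*} [CommSemiring R]
    {f : σ → MvPolynomial τ R} {P : MvPolynomial σ R} (hP : aeval f P = 0) (y : τ → R) :
    eval (fun i ↦ eval y (f i)) P = 0 :=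
  calc eval (fun i ↦ eval y (f i)) P = aeval y (aeval f P) :=
        (comp_aeval_apply f (aeval y) P).symm
    _ = 0 := by rw [hP, map_zero]

theorem exists_normSq_eq_and_re_pow_three_eq {a b : ℝ} (ha : 0 ≤ a) (hab : b ^ 2 ≤ a ^ 3) :
    ∃ z : ℂ, Complex.normSq z = a ∧ (z ^ 3).re = b := by
  obtain ⟨z, hz⟩ := IsAlgClosed.exists_pow_nat_eq (⟨b, √(a ^ 3 - b ^ 2)⟩ : ℂ) three_pos
  refine ⟨z, ?_, by rw [hz]⟩
  have hnormSq : Complex.normSq z ^ 3 = a ^ 3 := by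
    rw [← map_pow, hz, Complex.normSq_apply, ← sq, ← sq, Real.sq_sqrt (by linarith)]
    ring
  exact (pow_left_inj₀ (Complex.normSq_nonneg z) ha three_ne_zero).mp hnormSq

theorem exists_eval_polyX_eq_and_eval_polyY_eq {a b : ℝ} (ha : 0 ≤ a) (hab : b ^ 2 ≤ a ^ 3) :
    ∃ y : Fin 2 → ℝ, eval y polyX = a ∧ eval y polyY = b := by
  obtain ⟨z, hX, hY⟩ := exists_normSq_eq_and_re_pow_three_eq ha hab
  refine ⟨![z.re, z.im], ?_, ?_⟩
  · simp only [polyX, map_add, map_pow, eval_X, Matrix.cons_val_zero, Matrix.cons_val_one,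
      Matrix.cons_val_fin_one, ← hX, Complex.normSq_apply]
    ring
  · simp only [polyY, pow_succ, pow_zero, one_mul, map_sub, map_mul, eval_X, eval_ofNat,
      Matrix.cons_val_zero, Matrix.cons_val_one, Matrix.cons_val_fin_one, ← hY, Complex.mul_re,
      Complex.mul_im]
    ring

theorem stmt_13 (P : MvPolynomial (Fin 2) ℝ)
    (hP : MvPolynomial.aeval ![polyX, polyY] P = 0) : P = 0 := by
  refine funext_set ![Set.Ioi 1, Set.Ioo (-1) 1]
    (fun i ↦ by fin_cases i <;> simp [Set.Ioi_infinite, Set.Ioo_infinite]) fun v hv ↦ ?_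
  simp only [Set.mem_univ_pi, Fin.forall_fin_two, Matrix.cons_val_zero, Matrix.cons_val_one,
    Set.mem_Ioi, Set.mem_Ioo] at hv
  obtain ⟨ha, hb⟩ := hv
  have hab : v 1 ^ 2 ≤ v 0 ^ 3 := by nlinarith [one_lt_pow₀ ha three_ne_zero]
  obtain ⟨y, hX, hY⟩ := exists_eval_polyX_eq_and_eval_polyY_eq (by linarith) hab
  have hyv : (fun i ↦ eval y (![polyX, polyY] i)) = v := by
    ext i; fin_cases i <;> simp [hX, hY]
  rw [map_zero, ← hyv]
  exact eval_eq_zero_of_aeval_eq_zero hP y
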